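/- There exists a unitary deterministic filter whose compatibility relation is not transitive, and which is therefore not neighborhood comparable (NC). Concretely, the 5-state chain filter with states v0, v1, v2, v3, v4, a single observation a, transitions τ(v_i, a) = v_{i+1} for i = 0, 1, 2, 3 (and τ(v4, a) undefined), and outputs c(v0) = c(v2) = c(v4), c(v1) ≠ c(v3), satisfies v0 ∼ v4 and v4 ∼ v2 but v0 ≁ v2. -/

import Mathlib

/-!
A state without outgoing transitions has only the empty extension, so it is compatible with
every state of the same output: hence `v4 ∼ v0` and `v4 ∼ v2`. The word `aa` is an extension of
both `v0` and `v2` and produces the outputs `c v1` resp. `c v3` in the middle, so `v0 ≁ v2`.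
Finally NC forces compatibility to be transitive: if `v ∼ w ∼ u`, then `w` lies in both closed
neighborhoods `N[v]` and `N[u]`, and comparability puts `v` into `N[u]` or `u` into `N[v]`.
-/

/-- A clique cover of a simple graph: a finite family of cliques covering every vertex. -/
def SimpleGraph.IsCliqueCover {V : Type} (G : SimpleGraph V) (K : Finset (Finset V)) : Prop :=
  (∀ s ∈ K, G.IsClique (s : Set V)) ∧ ∀ v : V, ∃ s ∈ K, v ∈ s

/-- The clique cover number: minimum number of cliques in a clique cover. -/
noncomputable def SimpleGraph.cliqueCoverNum {V : Type} (G : SimpleGraph V) : ℕ :=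
  sInf {n | ∃ K : Finset (Finset V), G.IsCliqueCover K ∧ K.card = n}

/-- The closed neighborhood of a vertex. -/
def SimpleGraph.closedNbhd {V : Type} (G : SimpleGraph V) (v : V) : Set V :=
  {w | w = v ∨ G.Adj v w}

/-- A graph is chordal if every cycle of length at least four has a chord:
an edge of the graph joining two vertices of the cycle that is not an edge of the cycle. -/
def SimpleGraph.Chordal {V : Type} (G : SimpleGraph V) : Prop :=
  ∀ (v : V) (c : G.Walk v v), c.IsCycle → 4 ≤ c.length →
    ∃ x y : V, G.Adj x y ∧ x ∈ c.support ∧ y ∈ c.support ∧ s(x, y) ∉ c.edges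

/-- A deterministic (combinatorial) filter: states `S`, observations `Y`, outputs `C`,
an initial state, a partial transition function and an output function. -/
structure DFilter (S Y C : Type) where
  init : S
  tr : S → Y → Option S
  out : S → C

namespace DFilter

variable {S Y C : Type}

/-- Trace an observation sequence from a state (`none` if it crashes). -/
def run (F : DFilter S Y C) : S → List Y → Option S
  | v, [] => some v
  | v, y :: ys => (F.tr v y).bind fun w => F.run w ys

/-- The extensions of a state: observation sequences traceable from it. -/
def Ext (F : DFilter S Y C) (v : S) : Set (List Y) :=
  {s | (F.run v s).isSome}

/-- The output sequence produced by tracing an observation sequence from a state,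
reading the output at every visited state (starting with the output of the state itself). -/
def outs (F : DFilter S Y C) : S → List Y → Option (List C)
  | v, [] => some [F.out v]
  | v, y :: ys => (F.tr v y).bind fun w => (F.outs w ys).map (F.out v :: ·)

/-- Two states are compatible when the outputs they produce agree on all common extensions. -/
def Compatible (F : DFilter S Y C) (v w : S) : Prop :=
  ∀ s : List Y, s ∈ F.Ext v → s ∈ F.Ext w → F.outs v s = F.outs w s

/-- The compatibility graph: edges join distinct compatible states. -/
def compatGraph (F : DFilter S Y C) : SimpleGraph S where
  Adj v w := v ≠ w ∧ F.Compatible v w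
  symm := by
    constructor
    rintro v w ⟨hne, hc⟩
    exact ⟨hne.symm, fun s hw hv => (hc s hv hw).symm⟩
  loopless := ⟨fun v h => h.1 rfl⟩

/-- A filter is globally language comparable (GLC) when the extension sets of any two
compatible states are comparable under inclusion. -/
def GLC (F : DFilter S Y C) : Prop :=
  ∀ v w : S, F.Compatible v w → F.Ext v ⊆ F.Ext w ∨ F.Ext w ⊆ F.Ext v

/-- A filter is neighborhood comparable (NC) when any two vertices of its compatibility
graph with intersecting closed neighborhoods have comparable closed neighborhoods. -/
def NC (F : DFilter S Y C) : Prop :=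
  ∀ v w : S, (F.compatGraph.closedNbhd v ∩ F.compatGraph.closedNbhd w).Nonempty →
    F.compatGraph.closedNbhd v ⊆ F.compatGraph.closedNbhd w ∨
      F.compatGraph.closedNbhd w ⊆ F.compatGraph.closedNbhd v

/-- The target set of the determinism-enforcing zipper constraint generated by a
set of states `U` and an observation `y`: all `y`-children of members of `U`. -/
def zipTarget (F : DFilter S Y C) (U : Set S) (y : Y) : Set S :=
  {w | ∃ u ∈ U, F.tr u y = some w}

/-- A set of mutually compatible states. -/
def MutuallyCompatible (F : DFilter S Y C) (U : Set S) : Prop :=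
  ∀ u ∈ U, ∀ u' ∈ U, F.Compatible u u'

end DFilter


namespace DFilter

variable {S Y C : Type}

theorem Compatible.refl (F : DFilter S Y C) (v : S) : F.Compatible v v :=
  fun _ _ _ => rfl

theorem Compatible.symm {F : DFilter S Y C} {v w : S} (h : F.Compatible v w) :
    F.Compatible w v :=
  fun s hw hv => (h s hv hw).symm

theorem mem_closedNbhd_compatGraph (F : DFilter S Y C) {v w : S} :
    w ∈ F.compatGraph.closedNbhd v ↔ F.Compatible v w := by
  constructor
  · rintro (rfl | ⟨-, h⟩)
    exacts [Compatible.refl F w, h]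
  · intro h
    by_cases hwv : w = v
    exacts [Or.inl hwv, Or.inr ⟨Ne.symm hwv, h⟩]

theorem NC.compatible_trans {F : DFilter S Y C} (hF : F.NC) {v w u : S}
    (hvw : F.Compatible v w) (hwu : F.Compatible w u) : F.Compatible v u := by
  have hw : w ∈ F.compatGraph.closedNbhd v ∩ F.compatGraph.closedNbhd u :=
    ⟨F.mem_closedNbhd_compatGraph.2 hvw, F.mem_closedNbhd_compatGraph.2 hwu.symm⟩
  rcases hF v u ⟨w, hw⟩ with hvu | huv
  · exact (F.mem_closedNbhd_compatGraph.1 (hvu (Or.inl rfl))).symm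
  · exact F.mem_closedNbhd_compatGraph.1 (huv (Or.inl rfl))

theorem compatible_of_tr_eq_none (F : DFilter S Y C) {v w : S} (hv : ∀ y, F.tr v y = none)
    (hout : F.out v = F.out w) : F.Compatible v w := by
  rintro (_ | ⟨y, s⟩) hs -
  · simp [outs, hout]
  · simp [Ext, run, hv] at hs

def chain (c : Fin 5 → C) : DFilter (Fin 5) Unit C where
  init := 0
  tr v _ := if v.val < 4 then some (v + 1) else none
  out := c

theorem eq_chain {c : Fin 5 → C} {F : DFilter (Fin 5) Unit C} (hinit : F.init = 0)
    (hout : F.out = c) (htr : F.tr = fun v _ => if v.val < 4 then some (v + 1) else none) :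
    F = chain c := by
  cases F
  subst hinit hout htr
  rfl

theorem chain_run_init (c : Fin 5 → C) (v : Fin 5) :
    (chain c).run (chain c).init (List.replicate v.val ()) = some v := by
  fin_cases v <;> rfl

theorem chain_compatible_four {c : Fin 5 → C} {v : Fin 5} (h : c 4 = c v) :
    (chain c).Compatible 4 v :=
  compatible_of_tr_eq_none _ (fun _ => rfl) h

theorem chain_compatible_zero_four {c : Fin 5 → C} (h : c 0 = c 4) :
    (chain c).Compatible 0 4 :=
  (chain_compatible_four h.symm).symm

theorem chain_compatible_four_two {c : Fin 5 → C} (h : c 4 = c 2) :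
    (chain c).Compatible 4 2 :=
  chain_compatible_four h

theorem chain_not_compatible_zero_two {c : Fin 5 → C} (h13 : c 1 ≠ c 3) :
    ¬ (chain c).Compatible 0 2 := by
  intro h
  have houts : some [c 0, c 1, c 2] = some [c 2, c 3, c 4] := h [(), ()] rfl rfl
  simp only [Option.some.injEq, List.cons.injEq] at houts
  exact h13 houts.2.1

theorem chain_not_NC {c : Fin 5 → C} (h02 : c 0 = c 2) (h24 : c 2 = c 4) (h13 : c 1 ≠ c 3) :
    ¬ (chain c).NC := fun hNC =>
  chain_not_compatible_zero_two h13 <|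
    hNC.compatible_trans (chain_compatible_zero_four (h02.trans h24))
      (chain_compatible_four_two h24.symm)

end DFilter

open DFilter in
/-- There exists a unitary deterministic filter (finite nonempty state set, all states
reachable) whose compatibility relation is not transitive, hence which is not neighborhood
comparable. Concretely, the 5-state chain filter with transitions `vᵢ ↦ vᵢ₊₁` (i < 4) on a
single observation and outputs `c v0 = c v2 = c v4`, `c v1 ≠ c v3`, satisfies
`v0 ∼ v4`, `v4 ∼ v2` but `v0 ≁ v2`, and is not NC. -/
theorem unitary_not_nc :
    (∃ (S Y C : Type) (F : DFilter S Y C), Finite S ∧ Nonempty S ∧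
        (∃ y : Y, ∀ y' : Y, y' = y) ∧
        (∀ v : S, ∃ s : List Y, F.run F.init s = some v) ∧
        ¬ Transitive F.Compatible ∧ ¬ F.NC) ∧
    (∀ (C : Type) (c : Fin 5 → C), c 0 = c 2 → c 2 = c 4 → c 1 ≠ c 3 →
      ∀ F : DFilter (Fin 5) Unit C, F.init = 0 → F.out = c →
        F.tr = (fun v _ => if v.val < 4 then some (v + 1) else none) →
        F.Compatible 0 4 ∧ F.Compatible 4 2 ∧ ¬ F.Compatible 0 2 ∧ ¬ F.NC) := by
  refine ⟨?_, fun C c h02 h24 h13 F hinit hout htr => ?_⟩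
  · let c : Fin 5 → Bool := fun v => decide (v = 1)
    refine ⟨Fin 5, Unit, Bool, chain c, inferInstance, ⟨0⟩, ⟨(), fun _ => rfl⟩,
      fun v => ⟨_, chain_run_init c v⟩, fun ht => ?_, chain_not_NC rfl rfl (by decide)⟩
    exact chain_not_compatible_zero_two (c := c) (by decide)
      (ht (chain_compatible_zero_four rfl) (chain_compatible_four_two rfl))
  · rw [eq_chain hinit hout htr]
    exact ⟨chain_compatible_zero_four (h02.trans h24), chain_compatible_four_two h24.symm,
      chain_not_compatible_zero_two h13, chain_not_NC h02 h24 h13⟩
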